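/- arXiv:1103.1057 — 4 statements merged into one kernel-verified Lean document; each statement's English description precedes it below -/
import Mathlib

section
/- Let H = (V, E) be a hypergraph with Bip H connected and let f : E → ℕ be a hypertree. For any collection of edges α_e of Bip H, one for each e ∈ E, such that α_e is adjacent to e, there exists a spanning tree of Bip H realizing f that contains α_e for every e ∈ E. -/
/-! Start from any realization `T` of `f`. If the prescribed edge `v e` is missing from `T`, the
path of `T` from `e` to `v` leaves `e` through some edge `e z`; exchanging `e z` for `e v` yields
again a spanning tree of `Bip H`, with the same degree at every hyperedge, and it keeps all edges
at the other hyperedges. Doing this for each hyperedge in turn gives the required realization. -/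

open SimpleGraph Finset
open scoped Classical

noncomputable section

variable {α β : Type} [DecidableEq α] [DecidableEq β]

/-- A hypergraph: a finite set `V` of vertices, a finite (index) set `E` of hyperedges,
where the hyperedge indexed by `e ∈ E` is the nonempty set `incid e ⊆ V` of its vertices.
(Indexing hyperedges by a type allows multiset multiplicities, as in the paper.) -/
structure Hypergraph' (α β : Type) where
  V : Finset α
  E : Finset β
  incid : β → Finset α
  incid_sub : ∀ e ∈ E, incid e ⊆ V
  incid_nonempty : ∀ e ∈ E, (incid e).Nonempty

/-- The degree (valence) of a vertex in a graph. -/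
def degr {W : Type} (T : SimpleGraph W) (x : W) : ℕ := (T.neighborSet x).ncard

/-- Nullity (first Betti number) of a graph: #edges − #vertices + #components. -/
def nullity {W : Type} (G : SimpleGraph W) : ℕ :=
  G.edgeSet.ncard + Nat.card G.ConnectedComponent - Nat.card W

/-- The result of transferring one unit of valence from `a` to `b`. -/
def transferFun (f : β → ℕ) (a b : β) : β → ℕ :=
  fun x => if x = a then f a - 1 else if x = b then f b + 1 else f x

namespace Hypergraph'

variable (H : Hypergraph' α β)

/-- The bipartite graph associated to a hypergraph: color classes `V` and `E`,
with `v` joined to `e` iff `v ∈ incid e`. -/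
def Bip : SimpleGraph (↥H.V ⊕ ↥H.E) :=
  SimpleGraph.fromRel (fun x y =>
    ∃ (v : ↥H.V) (e : ↥H.E), x = Sum.inl v ∧ y = Sum.inr e ∧ (v : α) ∈ H.incid (e : β))

/-- A spanning tree of the associated bipartite graph. -/
def IsSpanningTree (T : SimpleGraph (↥H.V ⊕ ↥H.E)) : Prop :=
  T ≤ H.Bip ∧ T.IsTree

/-- `T` is a spanning tree of `Bip H` realizing the vector `f` (a function on the
hyperedges, encoded as a function on `β` vanishing off `E`): `T` has degree
`f e + 1` at each hyperedge `e`. -/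
def Realizes (T : SimpleGraph (↥H.V ⊕ ↥H.E)) (f : β → ℕ) : Prop :=
  H.IsSpanningTree T ∧ (∀ e, e ∉ H.E → f e = 0) ∧
    ∀ e : ↥H.E, degr T (Sum.inr e) = f (e : β) + 1

/-- A hypertree is a vector realized by some spanning tree of `Bip H`. -/
def IsHypertree (f : β → ℕ) : Prop := ∃ T, H.Realizes T f

/-- The bipartite graph `Bip H |_{E'}` induced by a subset `E'` of hyperedges:
color classes `∪E'` and `E'`. -/
def BipOn (E' : Finset β) : SimpleGraph (↥(E'.biUnion H.incid) ⊕ ↥E') :=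
  SimpleGraph.fromRel (fun x y =>
    ∃ (v : ↥(E'.biUnion H.incid)) (e : ↥E'),
      x = Sum.inl v ∧ y = Sum.inr e ∧ (v : α) ∈ H.incid (e : β))

/-- `c(E')`: the number of connected components of `Bip H |_{E'}`. -/
def compCount (E' : Finset β) : ℕ := Nat.card (H.BipOn E').ConnectedComponent

/-- `μ(E') = |∪E'| − c(E')` (and `μ(∅) = 0`). -/
def mu (E' : Finset β) : ℤ :=
  ((E'.biUnion H.incid).card : ℤ) - (H.compCount E' : ℤ)

/-- `f` is such that a transfer of valence is possible from `a` to `b`. -/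
def TransferPossible (f : β → ℕ) (a b : β) : Prop :=
  0 < f a ∧ H.IsHypertree (transferFun f a b)

/-- `e` is internally active w.r.t. the hypertree `f` and the order `o`. -/
def InternallyActive (o : LinearOrder β) (f : β → ℕ) (e : β) : Prop :=
  ∀ x ∈ H.E, o.lt x e → ¬ H.TransferPossible f e x

/-- `e` is externally active w.r.t. the hypertree `f` and the order `o`. -/
def ExternallyActive (o : LinearOrder β) (f : β → ℕ) (e : β) : Prop :=
  ∀ x ∈ H.E, o.lt x e → ¬ H.TransferPossible f x e

/-- `ῑ(f)`: the number of internally inactive hyperedges w.r.t. `f`. -/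
def intInact (o : LinearOrder β) (f : β → ℕ) : ℕ :=
  (H.E.filter (fun e => ¬ H.InternallyActive o f e)).card

/-- `ε̄(f)`: the number of externally inactive hyperedges w.r.t. `f`. -/
def extInact (o : LinearOrder β) (f : β → ℕ) : ℕ :=
  (H.E.filter (fun e => ¬ H.ExternallyActive o f e)).card

end Hypergraph'

namespace SimpleGraph

variable {W : Type} {T : SimpleGraph W} {x y z : W}

lemma IsTree.exists_isTree_deleteEdges_sup_edge (hT : T.IsTree) (hxy : x ≠ y)
    (hnadj : ¬T.Adj y x) :
    ∃ z, T.Adj y z ∧ (T.deleteEdges {s(y, z)} ⊔ edge y x).IsTree := by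
  obtain ⟨p, hp⟩ := (hT.connected y x).exists_isPath
  obtain ⟨z, hyz, q, rfl⟩ := Walk.exists_eq_cons_of_ne hxy.symm p
  have hyq : y ∉ q.support := ((Walk.cons_isPath_iff _ _).mp hp).2
  have hzx : (T.deleteEdges {s(y, z)}).Reachable z x :=
    reachable_deleteEdges_iff_exists_walk.mpr
      ⟨q, fun h => hyq (q.fst_mem_support_of_mem_edges h)⟩
  have hyz_bridge : ¬(T.deleteEdges {s(y, z)}).Reachable y z :=
    isBridge_iff.mp (isAcyclic_iff_forall_isBridge.mp hT.isAcyclic hyz)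
  refine ⟨z, hyz, ⟨?_, ?_⟩⟩
  · -- `yz` lies on the cycle `y x ⋯ z y` of `T ⊔ edge y x`, so deleting it keeps connectivity.
    have hdel : (T ⊔ edge y x).deleteEdges {s(y, z)} = T.deleteEdges {s(y, z)} ⊔ edge y x := by
      rw [deleteEdges_sup]
      congr 1
      ext u w
      simp only [deleteEdges_adj, edge_adj, Set.mem_singleton_iff, Sym2.eq_iff]
      grind
    rw [← hdel]
    refine (hT.connected.mono le_sup_left).connected_delete_edge_of_not_isBridge ?_
    rw [isBridge_iff, hdel, not_not]
    have hyx : (T.deleteEdges {s(y, z)} ⊔ edge y x).Adj y x :=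
      Or.inr ((edge_adj _ _ _ _).mpr ⟨Or.inl ⟨rfl, rfl⟩, hxy.symm⟩)
    exact hyx.reachable.trans (hzx.symm.mono le_sup_left)
  · refine (hT.isAcyclic.anti (deleteEdges_le _)).sup_edge_of_not_reachable fun hyx => ?_
    exact hyz_bridge (hyx.trans hzx.symm)

lemma neighborSet_deleteEdges_sup_edge_of_ne {w : W} (hwx : w ≠ x) (hwy : w ≠ y)
    (hwz : w ≠ z) :
    (T.deleteEdges {s(y, z)} ⊔ edge y x).neighborSet w = T.neighborSet w := by
  ext u
  simp only [mem_neighborSet, sup_adj, deleteEdges_adj, edge_adj, Set.mem_singleton_iff,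
    Sym2.eq_iff]
  grind

lemma neighborSet_deleteEdges_sup_edge_self (hxy : x ≠ y) :
    (T.deleteEdges {s(y, z)} ⊔ edge y x).neighborSet y = insert x (T.neighborSet y \ {z}) := by
  ext u
  simp only [mem_neighborSet, sup_adj, deleteEdges_adj, edge_adj, Set.mem_singleton_iff,
    Sym2.eq_iff, Set.mem_insert_iff, Set.mem_sdiff]
  grind

lemma degr_deleteEdges_sup_edge_self [Finite W] (hyz : T.Adj y z) (hnadj : ¬T.Adj y x)
    (hxy : x ≠ y) : degr (T.deleteEdges {s(y, z)} ⊔ edge y x) y = degr T y := by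
  rw [degr, neighborSet_deleteEdges_sup_edge_self hxy,
    Set.ncard_insert_of_notMem (fun h => hnadj h.1)]
  exact Set.ncard_sdiff_singleton_add_one hyz

end SimpleGraph

namespace Hypergraph'

lemma Realizes.exists_adj {γ ι : Type} {H : Hypergraph' γ ι} {T : SimpleGraph (↥H.V ⊕ ↥H.E)}
    {f : ι → ℕ} (hT : H.Realizes T f) {v : ↥H.V} {e : ↥H.E} (hve : (v : γ) ∈ H.incid e) :
    ∃ T', H.Realizes T' f ∧ T'.Adj (Sum.inl v) (Sum.inr e) ∧
      ∀ e' ≠ e, ∀ u, T.Adj (Sum.inl u) (Sum.inr e') → T'.Adj (Sum.inl u) (Sum.inr e') := by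
  by_cases hadj : T.Adj (Sum.inl v) (Sum.inr e)
  · exact ⟨T, hT, hadj, fun _ _ _ h => h⟩
  obtain ⟨⟨hle, htree⟩, hzero, hdeg⟩ := hT
  have hvne : (Sum.inl v : ↥H.V ⊕ ↥H.E) ≠ Sum.inr e := Sum.inl_ne_inr
  obtain ⟨z, hez, htree'⟩ := htree.exists_isTree_deleteEdges_sup_edge hvne (mt Adj.symm hadj)
  refine ⟨_, ⟨⟨sup_le ((deleteEdges_le _).trans hle) ?_, htree'⟩, hzero, fun e' => ?_⟩,
    Or.inr ((edge_adj _ _ _ _).mpr ⟨Or.inr ⟨rfl, rfl⟩, hvne⟩), fun e' he' u hu => ?_⟩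
  · exact (edge_le_iff _).mpr (Or.inr (by simpa [Bip] using hve))
  · by_cases he'e : e' = e
    · subst he'e
      rw [degr_deleteEdges_sup_edge_self hez (mt Adj.symm hadj) hvne, hdeg]
    · have hze' : Sum.inr e' ≠ z := by
        rintro rfl
        simpa [Bip] using hle hez
      rw [degr, neighborSet_deleteEdges_sup_edge_of_ne Sum.inr_ne_inl
        (by simpa using he'e) hze', ← degr, hdeg]
  · refine Or.inl (deleteEdges_adj.mpr ⟨hu, ?_⟩)
    simp [he']

end Hypergraph'

theorem realization_through_prescribed_edges_general (H : Hypergraph' α β)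
    (f : β → ℕ) (hf : H.IsHypertree f)
    (a : ↥H.E → ↥H.V) (ha : ∀ e : ↥H.E, (a e : α) ∈ H.incid (e : β)) :
    ∃ T : SimpleGraph (↥H.V ⊕ ↥H.E), H.Realizes T f ∧
      ∀ e : ↥H.E, T.Adj (Sum.inl (a e)) (Sum.inr e) := by
  obtain ⟨T₀, hT₀⟩ := hf
  have hprescribed : ∀ S : Finset ↥H.E,
      ∃ T, H.Realizes T f ∧ ∀ e ∈ S, T.Adj (Sum.inl (a e)) (Sum.inr e) := by
    intro S
    induction S using Finset.induction_on with
    | empty => exact ⟨T₀, hT₀, by simp⟩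
    | insert e S he ih =>
      obtain ⟨T, hT, hS⟩ := ih
      obtain ⟨T', hT', hadj, hkeep⟩ := hT.exists_adj (ha e)
      refine ⟨T', hT', Finset.forall_mem_insert _ _ _ |>.mpr ⟨hadj, fun e' he' => ?_⟩⟩
      exact hkeep e' (ne_of_mem_of_not_mem he' he) _ (hS e' he')
  obtain ⟨T, hT, hadj⟩ := hprescribed Finset.univ
  exact ⟨T, hT, fun e => hadj e (Finset.mem_univ e)⟩

/-- anchoring lemma: any prescribed collection of edges, one
adjacent to each hyperedge, is contained in some realization of a given hypertree. -/
theorem realization_through_prescribed_edges (H : Hypergraph' α β)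
    (hconn : H.Bip.Connected) (f : β → ℕ) (hf : H.IsHypertree f)
    (a : ↥H.E → ↥H.V) (ha : ∀ e : ↥H.E, (a e : α) ∈ H.incid (e : β)) :
    ∃ T : SimpleGraph (↥H.V ⊕ ↥H.E), H.Realizes T f ∧
      ∀ e : ↥H.E, T.Adj (Sum.inl (a e)) (Sum.inr e) :=
  realization_through_prescribed_edges_general H f hf a ha
end
end

section
/- Let H = (V, E) be a hypergraph with Bip H connected. Suppose the integer vector f : E → ℕ satisfies f(e) ≥ 0 for all e ∈ E and Σ_{e∈E'} f(e) ≤ |∪E'| − c(E') for all non-empty subsets E' ⊆ E (including E' = E), but not necessarily Σ_{e∈E} f(e) = |V| − 1. Then there exists a cycle-free subgraph of Bip H that has valence f(e)+1 at every e ∈ E. -/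
/-!
Induct on `∑ f`. Lower `f` by one at a hyperedge `e₀` with `f e₀ > 0` and take a forest `Q`
realizing the smaller vector. If some hyperedge `e₁` in the component of `e₀` contains a vertex
`v` outside it, then either `e₁ = e₀` and the edge `v e₀` raises the valence at `e₀`, or the
first edge of the path from `e₁` to `e₀` is traded for the edge `v e₁`: the valences stay the
same and the component of `e₀` loses `e₁`, so this can happen only finitely often. Otherwise the
component is closed: it is a tree containing every vertex of its set `E'` of hyperedges, so
counting its edges from the hyperedge side shows that `∑_{E'} f` equals the number of vertices
of `H` in it, which is at least `|∪E'| > |∪E'| - c(E')`, against the hypothesis.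
-/

open SimpleGraph Finset
open scoped Classical

noncomputable section

variable {α β : Type} [DecidableEq α] [DecidableEq β]

section Degree

variable {W : Type} {G : SimpleGraph W} {a b x : W}

lemma degr_eq_degree [Fintype (G.neighborSet x)] :
    degr G x = G.degree x := by
  rw [degr, Set.ncard_eq_toFinset_card', Set.toFinset_card, card_neighborSet_eq_degree]

lemma degr_sup_edge_of_ne (hxa : x ≠ a) (hxb : x ≠ b) : degr (G ⊔ edge a b) x = degr G x := by
  unfold degr
  congr 1
  ext y
  simp only [mem_neighborSet, sup_adj, edge_adj]
  grind

lemma degr_sup_edge_right [Finite W] (hab : a ≠ b) (h : ¬ G.Adj b a) :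
    degr (G ⊔ edge a b) b = degr G b + 1 := by
  have : (G ⊔ edge a b).neighborSet b = insert a (G.neighborSet b) := by
    ext y
    simp only [mem_neighborSet, sup_adj, edge_adj, Set.mem_insert_iff]
    grind
  unfold degr
  rw [this, Set.ncard_insert_of_notMem (s := G.neighborSet b) h]

lemma degr_deleteEdges_of_ne (hxa : x ≠ a) (hxb : x ≠ b) :
    degr (G.deleteEdges {s(a, b)}) x = degr G x := by
  unfold degr
  congr 1
  ext y
  simp only [mem_neighborSet, deleteEdges_adj, Set.mem_singleton_iff, Sym2.eq_iff]
  grind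

lemma degr_deleteEdges_add_one [Finite W] (h : G.Adj a b) :
    degr (G.deleteEdges {s(a, b)}) a + 1 = degr G a := by
  have : (G.deleteEdges {s(a, b)}).neighborSet a = G.neighborSet a \ {b} := by
    ext y
    simp only [mem_neighborSet, deleteEdges_adj, Set.mem_singleton_iff, Sym2.eq_iff,
      Set.mem_sdiff]
    grind
  unfold degr
  rw [this, Set.ncard_sdiff_singleton_add_one (s := G.neighborSet a) h]

end Degree

namespace SimpleGraph

section

variable {W : Type} {G : SimpleGraph W} {a b x y : W}

lemma Reachable.of_sup_edge (ha : ¬ G.Reachable x a) (hb : ¬ G.Reachable x b)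
    (h : (G ⊔ edge a b).Reachable x y) : G.Reachable x y := by
  induction (reachable_iff_reflTransGen _ _).mp h with
  | refl => rfl
  | tail hxc hadj ih =>
    have hxc := ih ((reachable_iff_reflTransGen _ _).mpr hxc)
    rcases hadj with hadj | hadj
    · exact hxc.trans hadj.reachable
    · rcases ((edge_adj _ _ _ _).mp hadj).1 with ⟨rfl, -⟩ | ⟨rfl, -⟩ <;> contradiction

lemma isAcyclic_of_forall_adj_subsingleton
    (h : ∀ ⦃x y⦄, G.Adj x y → (G.neighborSet x).Subsingleton ∨ (G.neighborSet y).Subsingleton) :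
    G.IsAcyclic := by
  refine isAcyclic_iff_forall_adj_isBridge.mpr fun x y hxy => ?_
  wlog hx : (G.neighborSet x).Subsingleton generalizing x y
  · rw [Sym2.eq_swap]
    exact this y x hxy.symm ((h hxy).resolve_left hx)
  rintro ⟨p⟩
  have hsnd := p.adj_snd (Walk.not_nil_of_ne hxy.ne)
  rw [deleteEdges_adj] at hsnd
  exact hsnd.2 (by rw [hx hsnd.1 hxy]; rfl)

lemma IsAcyclic.exists_adj_not_reachable_deleteEdges (hG : G.IsAcyclic) (hxy : G.Reachable x y)
    (hne : x ≠ y) : ∃ u, G.Adj x u ∧ ¬ (G.deleteEdges {s(x, u)}).Reachable x y := by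
  obtain ⟨p, hp⟩ := hxy.some.toPath
  cases p with
  | nil => exact absurd rfl hne
  | @cons _ u _ hxu q =>
    refine ⟨u, hxu, fun hr => ?_⟩
    have hq := (Walk.cons_isPath_iff _ _).mp hp
    have hqe : s(x, u) ∉ q.edges := fun he => hq.2 (q.fst_mem_support_of_mem_edges he)
    exact isBridge_iff.mp (isAcyclic_iff_forall_adj_isBridge.mp hG hxu)
      (hr.trans (q.toDeleteEdge _ hqe).reachable.symm)

lemma ConnectedComponent.degr_toSimpleGraph (C : G.ConnectedComponent) (v : C) :
    degr C.toSimpleGraph v = degr G v := by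
  have : G.neighborSet v = Subtype.val '' C.toSimpleGraph.neighborSet v := by
    ext y
    refine ⟨fun hy => ⟨⟨y, C.mem_supp_of_adj_mem_supp v.2 hy⟩, hy, rfl⟩, ?_⟩
    rintro ⟨y, hy, rfl⟩
    exact hy
  rw [degr, degr, this, Set.ncard_image_of_injective _ Subtype.val_injective]

lemma IsBipartiteWith.anti {G' : SimpleGraph W} {s t : Set W} (h : G'.IsBipartiteWith s t)
    (hle : G ≤ G') : G.IsBipartiteWith s t :=
  ⟨h.disjoint, fun _ _ hxy => h.mem_of_adj (hle hxy)⟩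

end

theorem IsAcyclic.sum_degr_inr_add_one {U V : Type} [Fintype U] [Fintype V] [DecidableEq U]
    [DecidableEq V] {G : SimpleGraph (U ⊕ V)} (hG : G.IsAcyclic)
    (hbip : G.IsBipartiteWith (Set.range Sum.inl) (Set.range Sum.inr))
    (C : G.ConnectedComponent) :
    ∑ w ∈ C.supp.toFinset.toRight, degr G (Sum.inr w) + 1 = #C.supp.toFinset := by
  set T := C.toSimpleGraph
  let s : Finset C := {x | x.val ∈ Set.range Sum.inl}
  let t : Finset C := {x | x.val ∈ Set.range Sum.inr}
  have hT : T.IsBipartiteWith s t := by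
    refine ⟨?_, fun x y hxy => ?_⟩
    · rw [Finset.disjoint_coe]
      exact disjoint_filter.mpr fun x _ hs ht => Set.disjoint_left.mp hbip.disjoint hs ht
    · simpa [s, t] using hbip.mem_of_adj hxy
  have hsum : ∑ w ∈ C.supp.toFinset.toRight, degr G (Sum.inr w) = ∑ x ∈ t, T.degree x := by
    refine sum_bij (fun w hw => ⟨Sum.inr w, by rw [mem_toRight, Set.mem_toFinset] at hw; exact hw⟩)
      (fun w _ => by simp [t]) (fun w _ w' _ h => by simpa using h) (fun x hx => ?_)
      (fun w _ => by rw [← degr_eq_degree, C.degr_toSimpleGraph])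
    obtain ⟨w, hw⟩ : ∃ w, Sum.inr w = x.val := by simpa [t] using hx
    exact ⟨w, by rw [mem_toRight, Set.mem_toFinset, hw]; exact x.2, Subtype.ext hw⟩
  rw [hsum, isBipartiteWith_sum_degrees_eq_card_edges' hT,
    (hG.isTree_connectedComponent C).card_edgeFinset, Set.toFinset_card]
  exact Fintype.card_congr (Equiv.refl _)

end SimpleGraph

lemma Finset.sum_update_add_of_mem {ι M : Type} [DecidableEq ι] [AddCommMonoid M] {s : Finset ι}
    {i : ι} (hi : i ∈ s) (f : ι → M) (b : M) :
    ∑ j ∈ s, Function.update f i (f i + b) j = ∑ j ∈ s, f j + b := by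
  rw [sum_update_of_mem hi, sum_eq_add_sum_sdiff_singleton_of_mem hi, add_right_comm]

namespace Hypergraph'

open Function Sum

variable {α β : Type} (H : Hypergraph' α β)

lemma bip_adj_inl_inr {v : H.V} {e : H.E} : H.Bip.Adj (inl v) (inr e) ↔ (v : α) ∈ H.incid e := by
  simp [Bip]

lemma isBipartiteWith_bip : H.Bip.IsBipartiteWith (Set.range inl) (Set.range inr) where
  disjoint := Set.disjoint_left.mpr (by rintro _ ⟨v, rfl⟩ ⟨e, he⟩; cases he)
  mem_of_adj x y h := by
    simp only [Bip, fromRel_adj] at h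
    aesop

structure IsAcyclicRealization (P : SimpleGraph (↥H.V ⊕ ↥H.E)) (g : β → ℕ) : Prop where
  le_bip : P ≤ H.Bip
  isAcyclic : P.IsAcyclic
  degr_eq : ∀ e : ↥H.E, degr P (inr e) = g e + 1

variable {H}

theorem exists_isAcyclicRealization_of_forall_eq_zero {g : β → ℕ} (hg : ∀ e ∈ H.E, g e = 0) :
    ∃ P, H.IsAcyclicRealization P g := by
  choose v hv using fun e : H.E => H.incid_nonempty e e.2
  let c : H.E → H.V := fun e => ⟨v e, H.incid_sub e e.2 (hv e)⟩
  let P : SimpleGraph (↥H.V ⊕ ↥H.E) := fromRel fun x y => ∃ e, x = inl (c e) ∧ y = inr e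
  have hP : ∀ e, P.neighborSet (inr e) = {inl (c e)} := by
    intro e
    ext x
    simp only [P, mem_neighborSet, fromRel_adj, Set.mem_singleton_iff]
    aesop
  have hle : P ≤ H.Bip := by
    rintro x y ⟨-, ⟨e, rfl, rfl⟩ | ⟨e, rfl, rfl⟩⟩
    · exact H.bip_adj_inl_inr.mpr (hv e)
    · exact (H.bip_adj_inl_inr.mpr (hv e)).symm
  refine ⟨P, hle, isAcyclic_of_forall_adj_subsingleton fun x y hxy => ?_, fun e => ?_⟩
  · rcases H.isBipartiteWith_bip.mem_of_adj (hle hxy) with ⟨-, e, rfl⟩ | ⟨⟨e, rfl⟩, -⟩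
    · exact .inr (hP e ▸ Set.subsingleton_singleton)
    · exact .inl (hP e ▸ Set.subsingleton_singleton)
  · rw [degr, hP, Set.ncard_singleton, hg e e.2]

variable {Q : SimpleGraph (↥H.V ⊕ ↥H.E)} {g : β → ℕ}

theorem IsAcyclicRealization.sup_edge [DecidableEq β] (hQ : H.IsAcyclicRealization Q g)
    {e₀ : H.E} {v : H.V} (hv : (v : α) ∈ H.incid e₀) (hnr : ¬ Q.Reachable (inl v) (inr e₀)) :
    H.IsAcyclicRealization (Q ⊔ edge (inl v) (inr e₀)) (update g e₀ (g e₀ + 1)) where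
  le_bip := sup_le hQ.le_bip ((edge_le_iff _).mpr (.inr (H.bip_adj_inl_inr.mpr hv)))
  isAcyclic := hQ.isAcyclic.sup_edge_of_not_reachable hnr
  degr_eq e := by
    by_cases he : e = e₀
    · subst he
      rw [degr_sup_edge_right inl_ne_inr fun h => hnr h.symm.reachable, hQ.degr_eq, update_self]
    · rw [degr_sup_edge_of_ne inr_ne_inl (inr_injective.ne he), hQ.degr_eq,
        update_of_ne (Subtype.val_injective.ne he)]

theorem IsAcyclicRealization.exists_ssubset_reachable (hQ : H.IsAcyclicRealization Q g)
    {e₀ e₁ : H.E} (hne : e₁ ≠ e₀) (he₁ : Q.Reachable (inr e₀) (inr e₁)) {v : H.V}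
    (hv : (v : α) ∈ H.incid e₁) (hnv : ¬ Q.Reachable (inr e₀) (inl v)) :
    ∃ Q', H.IsAcyclicRealization Q' g ∧
      {y | Q'.Reachable (inr e₀) y} ⊂ {y | Q.Reachable (inr e₀) y} := by
  obtain ⟨u, hu, hsep⟩ :=
    hQ.isAcyclic.exists_adj_not_reachable_deleteEdges he₁.symm (inr_injective.ne hne)
  obtain ⟨w, rfl⟩ : ∃ w, inl w = u :=
    H.isBipartiteWith_bip.mem_of_mem_adj' (Set.mem_range_self e₁) (hQ.le_bip hu).symm
  set Qd := Q.deleteEdges {s(inr e₁, inl w)}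
  have hQd : Qd ≤ Q := deleteEdges_le _
  have hsep' : ¬ Qd.Reachable (inr e₀) (inr e₁) := fun h => hsep h.symm
  have hnv' : ¬ Qd.Reachable (inr e₀) (inl v) := fun h => hnv (h.mono hQd)
  have hnvr : ¬ Qd.Reachable (inl v) (inr e₁) := fun h => hnv (he₁.trans (h.mono hQd).symm)
  refine ⟨Qd ⊔ edge (inl v) (inr e₁), ⟨?_, ?_, fun e => ?_⟩, ?_⟩
  · exact sup_le (hQd.trans hQ.le_bip) ((edge_le_iff _).mpr (.inr (H.bip_adj_inl_inr.mpr hv)))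
  · exact (hQ.isAcyclic.anti hQd).sup_edge_of_not_reachable hnvr
  · by_cases he : e = e₁
    · subst he
      rw [degr_sup_edge_right inl_ne_inr fun h => hnvr h.symm.reachable,
        degr_deleteEdges_add_one hu, hQ.degr_eq]
    · rw [degr_sup_edge_of_ne inr_ne_inl (inr_injective.ne he),
        degr_deleteEdges_of_ne (inr_injective.ne he) inr_ne_inl, hQ.degr_eq]
  · refine (Set.ssubset_iff_of_subset fun y hy => ?_).mpr ⟨inr e₁, he₁, fun h => ?_⟩
    · exact ((Reachable.of_sup_edge hnv' hsep') hy).mono hQd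
    · exact hsep' (Reachable.of_sup_edge hnv' hsep' h)

theorem IsAcyclicRealization.sum_add_one_eq_card_toLeft [DecidableEq α] [DecidableEq β]
    (hQ : H.IsAcyclicRealization Q g) (C : Q.ConnectedComponent) :
    ∑ e ∈ C.supp.toFinset.toRight, g e + 1 = #C.supp.toFinset.toLeft := by
  have h := hQ.isAcyclic.sum_degr_inr_add_one (H.isBipartiteWith_bip.anti hQ.le_bip) C
  rw [← card_toLeft_add_card_toRight] at h
  simp only [hQ.degr_eq, sum_add_distrib, sum_const, smul_eq_mul, mul_one] at h
  omega

theorem IsAcyclicRealization.exists_mu_le_sum [DecidableEq α] (hQ : H.IsAcyclicRealization Q g)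
    (e₀ : H.E) (hcl : ∀ (e : H.E) (v : H.V), Q.Reachable (inr e₀) (inr e) →
      (v : α) ∈ H.incid e → Q.Reachable (inr e₀) (inl v)) :
    ∃ E' ⊆ H.E, (e₀ : β) ∈ E' ∧ H.mu E' ≤ ∑ e ∈ E', (g e : ℤ) := by
  set C := Q.connectedComponentMk (inr e₀)
  have hC : ∀ y, y ∈ C.supp.toFinset ↔ Q.Reachable (inr e₀) y := fun y => by
    simp [C, ConnectedComponent.eq, reachable_comm]
  set E' := C.supp.toFinset.toRight.map (Embedding.subtype _)
  have hE' : ∀ e : H.E, (e : β) ∈ E' ↔ Q.Reachable (inr e₀) (inr e) := by simp [E', hC]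
  have he₀ : (e₀ : β) ∈ E' := (hE' e₀).mpr .rfl
  have hunion : #(E'.biUnion H.incid) ≤ #C.supp.toFinset.toLeft := by
    rw [← card_map (Embedding.subtype _)]
    refine card_le_card fun a ha => ?_
    obtain ⟨e, he, ha⟩ := mem_biUnion.mp ha
    obtain ⟨e, -, rfl⟩ := mem_map.mp he
    have hv := H.incid_sub e e.2 ha
    simpa [hC] using ⟨hv, hcl e ⟨a, hv⟩ ((hE' e).mp he) ha⟩
  have hcomp : 1 ≤ H.compCount E' :=
    have : Nonempty (H.BipOn E').ConnectedComponent :=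
      ⟨(H.BipOn E').connectedComponentMk (inr ⟨e₀, he₀⟩)⟩
    Nat.card_pos
  refine ⟨E', fun e he => ?_, he₀, ?_⟩
  · obtain ⟨e, -, rfl⟩ := mem_map.mp he
    exact e.2
  · have hsum := hQ.sum_add_one_eq_card_toLeft C
    rw [mu, sum_map, ← Nat.cast_sum]
    simp only [Embedding.coe_subtype]
    omega

theorem IsAcyclicRealization.exists_update_succ_or_exists_mu_le_sum [DecidableEq α]
    [DecidableEq β]
    (hQ : H.IsAcyclicRealization Q g) (e₀ : H.E) :
    (∃ P, H.IsAcyclicRealization P (update g e₀ (g e₀ + 1))) ∨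
      ∃ E' ⊆ H.E, (e₀ : β) ∈ E' ∧ H.mu E' ≤ ∑ e ∈ E', (g e : ℤ) := by
  induction hn : {y | Q.Reachable (inr e₀) y}.ncard using Nat.strong_induction_on
    generalizing Q with
  | _ n ih =>
    by_cases hcl : ∀ (e : H.E) (v : H.V), Q.Reachable (inr e₀) (inr e) →
        (v : α) ∈ H.incid e → Q.Reachable (inr e₀) (inl v)
    · exact .inr (hQ.exists_mu_le_sum e₀ hcl)
    push Not at hcl
    obtain ⟨e₁, v, he₁, hv, hnv⟩ := hcl
    by_cases hne : e₁ = e₀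
    · subst hne
      exact .inl ⟨_, hQ.sup_edge hv fun h => hnv (he₁.trans h.symm)⟩
    · obtain ⟨Q', hQ', hlt⟩ := hQ.exists_ssubset_reachable hne he₁ hv hnv
      exact ih _ (hn ▸ Set.ncard_lt_ncard hlt) hQ' rfl

theorem exists_isAcyclicRealization [DecidableEq α] (hμ : ∀ E' ⊆ H.E, E'.Nonempty →
      ∑ e ∈ E', (g e : ℤ) ≤ H.mu E') :
    ∃ P, H.IsAcyclicRealization P g := by
  classical
  induction hn : ∑ e ∈ H.E, g e generalizing g with
  | zero => exact exists_isAcyclicRealization_of_forall_eq_zero (sum_eq_zero_iff.mp hn)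
  | succ n ih =>
    obtain ⟨e₀, he₀, hpos⟩ : ∃ e ∈ H.E, g e ≠ 0 := exists_ne_zero_of_sum_ne_zero (by omega)
    set g' := update g e₀ (g e₀ - 1)
    have hg : update g' e₀ (g' e₀ + 1) = g := by
      simp [g', Nat.sub_add_cancel (Nat.pos_of_ne_zero hpos)]
    have hsum : ∀ s, e₀ ∈ s → ∑ e ∈ s, g e = ∑ e ∈ s, g' e + 1 := fun s hs => by
      rw [← hg, sum_update_add_of_mem hs]
    have hg' : ∀ e, g' e ≤ g e := fun e => by by_cases he : e = e₀ <;> simp [g', he]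
    obtain ⟨Q, hQ⟩ := ih (fun E' hE' hne => (sum_le_sum fun e _ => by exact_mod_cast hg' e).trans
      (hμ E' hE' hne)) (by have := hsum _ he₀; omega)
    rcases hQ.exists_update_succ_or_exists_mu_le_sum ⟨e₀, he₀⟩ with hP | ⟨E', hE', he₀', hmu⟩
    · exact hg ▸ hP
    · have hle := hμ E' hE' ⟨e₀, he₀'⟩
      rw [← Nat.cast_sum] at hle hmu
      have := hsum E' he₀'
      omega

end Hypergraph'

theorem cyclefree_realization_general (H : Hypergraph' α β)
    (f : β → ℕ)
    (h2 : ∀ E' : Finset β, E' ⊆ H.E → E'.Nonempty →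
      (∑ e ∈ E', (f e : ℤ)) ≤ H.mu E') :
    ∃ P : SimpleGraph (↥H.V ⊕ ↥H.E), P ≤ H.Bip ∧ P.IsAcyclic ∧
      ∀ e : ↥H.E, degr P (Sum.inr e) = f (e : β) + 1 := by
  obtain ⟨P, hP⟩ := Hypergraph'.exists_isAcyclicRealization h2
  exact ⟨P, hP.le_bip, hP.isAcyclic, hP.degr_eq⟩

/-- a vector satisfying the nonnegativity and submodular upper-bound
conditions (but not necessarily the total-sum condition) is realized by a cycle-free
subgraph of `Bip H` with valence `f e + 1` at every hyperedge `e`. -/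
theorem cyclefree_realization (H : Hypergraph' α β) (hconn : H.Bip.Connected)
    (f : β → ℕ) (hf0 : ∀ e, e ∉ H.E → f e = 0)
    (h1 : ∀ e ∈ H.E, 0 ≤ f e)
    (h2 : ∀ E' : Finset β, E' ⊆ H.E → E'.Nonempty →
      (∑ e ∈ E', (f e : ℤ)) ≤ H.mu E') :
    ∃ P : SimpleGraph (↥H.V ⊕ ↥H.E), P ≤ H.Bip ∧ P.IsAcyclic ∧
      ∀ e : ↥H.E, degr P (Sum.inr e) = f (e : β) + 1 :=
  cyclefree_realization_general H f h2
end
end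

section
/- Let {f_i} be a set of hypertrees in the hypergraph H = (V, E) (with Bip H connected) and let g : E → ℕ be a function so that g(e) ≥ 0 for all e ∈ E and Σ_{e∈E} g(e) = |V| − 1. If for every non-empty subset E' ⊆ E there is an index i with Σ_{e∈E'} g(e) ≤ Σ_{e∈E'} f_i(e), then g is a hypertree of H. -/
open SimpleGraph Finset
open scoped Classical

noncomputable section

variable {α β : Type} [DecidableEq α] [DecidableEq β]

/-!
Take a hypertree `f` minimising the total deficit `∑ e, (g e - f e)` and suppose `f b < g b`.
Let `C` consist of `b` and of the hyperedges that can pass one unit of valence to `b`. An exchange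
argument between two spanning trees shows that every hyperedge able to pass a unit into `C` lies
in `C`. Then the edges of a tree realising `f` at `C` are a maximal forest among the edges of
`Bip H` at `C`, so by counting edges every hypertree `h` has `∑ c ∈ C, h c ≤ ∑ c ∈ C, f c`.
Minimality gives `f ≤ g` on `C`, strictly at `b`, contradicting `∑ c ∈ C, g c ≤ ∑ c ∈ C, F i c`.
Hence `g ≤ f`, and the two sums agree, so `f = g`.
-/

namespace SimpleGraph

variable {V : Type*} {G G' : SimpleGraph V} {u v x y : V}

theorem Walk.reachable_deleteEdges_or (p : G.Walk x u) (v : V) :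
    (G.deleteEdges {s(u, v)}).Reachable x u ∨ (G.deleteEdges {s(u, v)}).Reachable x v := by
  induction p with
  | nil => exact .inl (.refl _)
  | @cons a b c hab _ ih =>
    by_cases he : s(a, b) = s(c, v)
    · rcases Sym2.eq_iff.mp he with ⟨rfl, -⟩ | ⟨rfl, -⟩
      exacts [.inl (.refl _), .inr (.refl _)]
    · have hab' : (G.deleteEdges {s(c, v)}).Adj a b := by simpa [he] using hab
      exact ih.imp hab'.reachable.trans hab'.reachable.trans

theorem Reachable.deleteEdges_of_not_reachable (h : G.Reachable x y) (hxu : ¬ G.Reachable x u)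
    (v : V) : (G.deleteEdges {s(u, v)}).Reachable x y := by
  obtain ⟨p⟩ := h
  refine reachable_deleteEdges_iff_exists_walk.mpr ⟨p, fun he => hxu ?_⟩
  exact ⟨p.takeUntil u (p.fst_mem_support_of_mem_edges he)⟩

theorem card_connectedComponent_le_of_forall_adj_reachable [Finite V]
    (h : ∀ ⦃a b⦄, G.Adj a b → G'.Reachable a b) :
    Nat.card G'.ConnectedComponent ≤ Nat.card G.ConnectedComponent := by
  have hreach : ∀ ⦃a b⦄, G.Reachable a b → G'.Reachable a b := by
    rintro a b ⟨p⟩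
    induction p with
    | nil => rfl
    | cons hadj _ ih => exact (h hadj).trans ih
  exact Nat.card_le_card_of_surjective (ConnectedComponent.lift G'.connectedComponentMk
    fun _ _ p _ => ConnectedComponent.sound (hreach p.reachable))
    fun c => c.ind fun a => ⟨G.connectedComponentMk a, rfl⟩

theorem IsBridge.card_connectedComponent_deleteEdges [Finite V] (hadj : G.Adj u v)
    (hbr : G.IsBridge s(u, v)) :
    Nat.card (G.deleteEdges {s(u, v)}).ConnectedComponent =
      Nat.card G.ConnectedComponent + 1 := by
  set G' := G.deleteEdges {s(u, v)}
  set φ := ConnectedComponent.map (Hom.ofLE (G.deleteEdges_le {s(u, v)}))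
  -- deleting the bridge splits the component of `u` and `v` in two and keeps all the others
  let Φ : G'.ConnectedComponent → Option G.ConnectedComponent := fun c =>
    if c = G'.connectedComponentMk v then none else some (φ c)
  have hu : G'.connectedComponentMk u ≠ G'.connectedComponentMk v := fun h =>
    hbr (ConnectedComponent.exact h)
  have hcomp_u : ∀ a, G.Reachable a u → G'.connectedComponentMk a ≠ G'.connectedComponentMk v →
      G'.connectedComponentMk a = G'.connectedComponentMk u := by
    rintro a ⟨p⟩ hav
    rcases p.reachable_deleteEdges_or v with h | h
    · exact ConnectedComponent.sound h
    · exact absurd (ConnectedComponent.sound h) hav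
  rw [← Finite.card_option]
  refine Nat.card_eq_of_bijective Φ ⟨fun c c' hcc => ?_, ?_⟩
  · induction c using ConnectedComponent.ind with | _ a =>
    induction c' using ConnectedComponent.ind with | _ b =>
    by_cases ha : G'.connectedComponentMk a = G'.connectedComponentMk v <;>
      by_cases hb : G'.connectedComponentMk b = G'.connectedComponentMk v <;>
      simp only [Φ, φ, ha, hb, if_true, if_false, reduceCtorEq, Option.some.injEq] at hcc ⊢
    have hab : G.Reachable a b := ConnectedComponent.exact hcc
    by_cases hau : G.Reachable a u
    · rw [hcomp_u a hau ha, hcomp_u b (hab.symm.trans hau) hb]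
    · exact ConnectedComponent.sound (hab.deleteEdges_of_not_reachable hau v)
  · rintro (_ | c)
    · exact ⟨G'.connectedComponentMk v, if_pos rfl⟩
    induction c using ConnectedComponent.ind with | _ x =>
    by_cases hxu : G.Reachable x u
    · refine ⟨G'.connectedComponentMk u, ?_⟩
      simp only [Φ, φ, if_neg hu]
      exact congrArg some (ConnectedComponent.sound hxu.symm)
    · have hxv : G'.connectedComponentMk x ≠ G'.connectedComponentMk v := fun h =>
        hxu ((ConnectedComponent.exact h).mono (deleteEdges_le _) |>.trans hadj.symm.reachable)
      exact ⟨G'.connectedComponentMk x, by simp only [Φ, φ, if_neg hxv]; rfl⟩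

theorem card_connectedComponent_bot [Finite V] :
    Nat.card (⊥ : SimpleGraph V).ConnectedComponent = Nat.card V :=
  (Nat.card_eq_of_bijective _ ⟨fun _ _ h => reachable_bot.mp (ConnectedComponent.exact h),
    fun c => c.ind fun a => ⟨a, rfl⟩⟩).symm

theorem IsAcyclic.card_edgeSet_add_card_connectedComponent [Finite V] (hG : G.IsAcyclic) :
    Nat.card G.edgeSet + Nat.card G.ConnectedComponent = Nat.card V := by
  rw [Nat.card_coe_set_eq]
  induction h : G.edgeSet.ncard generalizing G with
  | zero =>
    obtain rfl : G = ⊥ := edgeSet_eq_empty.mp ((Set.ncard_eq_zero (Set.toFinite _)).mp h)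
    simp [card_connectedComponent_bot]
  | succ n ih =>
    obtain ⟨e, he⟩ := Set.nonempty_of_ncard_ne_zero (by rw [h]; omega)
    induction e using Sym2.ind with | _ u v =>
    have hG' : (G.deleteEdges {s(u, v)}).IsAcyclic := hG.anti (deleteEdges_le _)
    have hcard : (G.deleteEdges {s(u, v)}).edgeSet.ncard = n := by
      rw [edgeSet_deleteEdges, Set.ncard_sdiff_singleton_of_mem he, h, Nat.add_sub_cancel]
    have := ih hG' hcard
    rw [(isAcyclic_iff_forall_isBridge.mp hG he).card_connectedComponent_deleteEdges he] at this
    omega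

theorem IsAcyclic.card_edgeSet_le_of_forall_adj_reachable [Finite V] (hG : G.IsAcyclic)
    (h : ∀ ⦃a b⦄, G.Adj a b → G'.Reachable a b) : Nat.card G.edgeSet ≤ Nat.card G'.edgeSet := by
  obtain ⟨F, hFG', hF, hFreach⟩ := G'.exists_isAcyclic_reachable_eq_le
  have hcomp : Nat.card F.ConnectedComponent ≤ Nat.card G.ConnectedComponent :=
    card_connectedComponent_le_of_forall_adj_reachable fun a b hab => hFreach ▸ h hab
  have hedge : Nat.card F.edgeSet ≤ Nat.card G'.edgeSet :=
    Nat.card_mono (Set.toFinite _) (edgeSet_mono hFG')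
  have := hG.card_edgeSet_add_card_connectedComponent
  have := hF.card_edgeSet_add_card_connectedComponent
  omega

theorem IsAcyclic.not_reachable_deleteEdges_of_mem_edges (hG : G.IsAcyclic) {p : G.Walk x y}
    (hp : p.IsPath) {e : Sym2 V} (he : e ∈ p.edges) : ¬ (G.deleteEdges {e}).Reachable x y := by
  rintro ⟨q⟩
  have hpq := (hG.subsingleton_path x y).elim ⟨p, hp⟩
    ⟨q.bypass.mapLe (deleteEdges_le _), q.bypass_isPath.mapLe _⟩
  rw [Subtype.mk.injEq] at hpq
  rw [hpq, Walk.edges_mapLe_eq_edges] at he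
  simpa using q.bypass.edges_subset_edgeSet he

def replaceEdge (G : SimpleGraph V) (u v x y : V) : SimpleGraph V :=
  G.deleteEdges {s(u, v)} ⊔ edge x y

theorem edgeSet_replaceEdge (hxy : x ≠ y) :
    (G.replaceEdge u v x y).edgeSet = insert s(x, y) (G.edgeSet \ {s(u, v)}) := by
  rw [replaceEdge, edgeSet_sup, edgeSet_edge_of_ne hxy, edgeSet_deleteEdges, Set.union_singleton]

theorem IsTree.replaceEdge [Finite V] {T : SimpleGraph V} (hT : T.IsTree)
    (huv : T.Adj u v) (hsep : ¬ (T.deleteEdges {s(u, v)}).Reachable x y) :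
    (T.replaceEdge u v x y).IsTree := by
  have hle : T.deleteEdges {s(u, v)} ≤ T.replaceEdge u v x y := le_sup_left
  have hxy : x ≠ y := fun h => hsep (h ▸ .refl x)
  have hadj : (T.replaceEdge u v x y).Adj x y := Or.inr ((edge_adj ..).mpr ⟨.inl ⟨rfl, rfl⟩, hxy⟩)
  -- `x` and `y` lie on different sides of the removed edge, so the new edge reconnects them
  have huv' : (T.replaceEdge u v x y).Reachable u v := by
    obtain ⟨px⟩ := hT.connected.preconnected x u
    obtain ⟨py⟩ := hT.connected.preconnected y u
    rcases px.reachable_deleteEdges_or v with hx | hx <;>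
      rcases py.reachable_deleteEdges_or v with hy | hy
    · exact absurd (hx.trans hy.symm) hsep
    · exact ((hx.symm.mono hle).trans hadj.reachable).trans (hy.mono hle)
    · exact ((hy.symm.mono hle).trans hadj.symm.reachable).trans (hx.mono hle)
    · exact absurd (hx.trans hy.symm) hsep
  have hu : ∀ a, (T.replaceEdge u v x y).Reachable a u := fun a => by
    obtain ⟨p⟩ := hT.connected.preconnected a u
    rcases p.reachable_deleteEdges_or v with h | h
    exacts [h.mono hle, (h.mono hle).trans huv'.symm]
  have : Nonempty V := ⟨x⟩
  have hxyT' : s(x, y) ∉ T.edgeSet \ {s(u, v)} := fun h => hsep (Adj.reachable (by simpa using h))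
  rw [isTree_iff_connected_and_card, Nat.card_coe_set_eq, edgeSet_replaceEdge hxy,
    Set.ncard_insert_of_notMem hxyT',
    Set.ncard_sdiff_singleton_add_one (show s(u, v) ∈ T.edgeSet from huv), ← Nat.card_coe_set_eq]
  exact ⟨.mk fun a b => (hu a).trans (hu b).symm, (isTree_iff_connected_and_card.mp hT).2⟩

theorem degree_replaceEdge_add [Fintype V] {T : SimpleGraph V} (huv : T.Adj u v)
    (hxy : ¬ T.Adj x y) (hne : x ≠ y) (z : V) :
    (T.replaceEdge u v x y).degree z + (if z ∈ s(u, v) then 1 else 0) =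
      T.degree z + (if z ∈ s(x, y) then 1 else 0) := by
  have hedges : (T.replaceEdge u v x y).edgeFinset =
      insert s(x, y) (T.edgeFinset.erase s(u, v)) := by
    ext e
    simp only [mem_edgeFinset, edgeSet_replaceEdge hne, Finset.mem_insert, Finset.mem_erase,
      Set.mem_insert_iff, Set.mem_sdiff, Set.mem_singleton_iff]
    tauto
  -- `F` stands for the set of edges of `T` at `z`
  suffices ∀ F : Finset (Sym2 V), (s(u, v) ∈ F ↔ z ∈ s(u, v)) → s(x, y) ∉ F →
      #(if z ∈ s(x, y) then insert s(x, y) (F.erase s(u, v)) else F.erase s(u, v)) +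
        (if z ∈ s(u, v) then 1 else 0) = #F + (if z ∈ s(x, y) then 1 else 0) by
    simp only [← card_incidenceFinset_eq_degree, incidenceFinset_eq_filter, hedges,
      Finset.filter_insert, Finset.filter_erase]
    exact this _ (by simp [huv]) (by simp [hxy])
  intro F huvF hxyF
  have hF : #(F.erase s(u, v)) + (if z ∈ s(u, v) then 1 else 0) = #F := by
    split_ifs with hz
    · exact Finset.card_erase_add_one (huvF.mpr hz)
    · rw [Finset.erase_eq_of_notMem (mt huvF.mp hz), add_zero]
  by_cases hz : z ∈ s(x, y)
  · rw [if_pos hz, if_pos hz, Finset.card_insert_of_notMem (mt Finset.mem_of_mem_erase hxyF)]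
    omega
  · rw [if_neg hz, if_neg hz]
    omega

theorem card_edgeFinset_sdiff_replaceEdge_lt [Fintype V] [DecidableEq V] {T : SimpleGraph V}
    (hxy : G.Adj x y) (hxyT : ¬ T.Adj x y) (huv : ¬ G.Adj u v) :
    #(G.edgeFinset \ (T.replaceEdge u v x y).edgeFinset) < #(G.edgeFinset \ T.edgeFinset) := by
  have hmem : ∀ e, e ∈ (T.replaceEdge u v x y).edgeFinset ↔
      e = s(x, y) ∨ e ∈ T.edgeSet ∧ e ≠ s(u, v) := by
    simp [edgeSet_replaceEdge hxy.ne]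
  refine Finset.card_lt_card ⟨fun e he => ?_, fun h => ?_⟩
  · simp only [Finset.mem_sdiff, mem_edgeFinset, hmem] at he ⊢
    exact ⟨he.1, fun heT => he.2 (.inr ⟨heT, by rintro rfl; exact huv he.1⟩)⟩
  · have := h (Finset.mem_sdiff.mpr ⟨mem_edgeFinset.mpr hxy, fun h =>
      hxyT (mem_edgeFinset.mp h : s(x, y) ∈ T.edgeSet)⟩)
    simp [hmem] at this

theorem IsAcyclic.exists_mem_edges_notMem_edgeSet (hG : G.IsAcyclic) (hxy : G.Adj x y)
    {p : G'.Walk x y} (hp : p.IsPath) (hpxy : s(x, y) ∉ p.edges) :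
    ∃ e ∈ p.edges, e ∉ G.edgeSet := by
  by_contra! h
  refine hG _ ((Walk.cons_isCycle_iff _ hxy.symm).mpr ⟨hp.transfer h, ?_⟩)
  rwa [Walk.edges_transfer, Sym2.eq_swap]

theorem exists_adj_not_adj_of_degree_lt [Fintype V] {v : V} (h : G.degree v < G'.degree v) :
    ∃ w, G'.Adj v w ∧ ¬ G.Adj v w := by
  by_contra! hsub
  have := Finset.card_le_card fun w hw => mem_neighborFinset _ _ _ |>.mpr <|
    hsub w <| (mem_neighborFinset G' v w).mp hw
  rw [card_neighborFinset_eq_degree, card_neighborFinset_eq_degree] at this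
  omega

end SimpleGraph

section transferFun

variable {β : Type} [DecidableEq β] {f g : β → ℕ} {a b c x : β}

theorem transferFun_apply_left : transferFun f a b a = f a - 1 := by
  simp [transferFun]

theorem transferFun_apply_right (hab : a ≠ b) : transferFun f a b b = f b + 1 := by
  simp [transferFun, hab.symm]

theorem transferFun_apply_of_ne (hxa : x ≠ a) (hxb : x ≠ b) : transferFun f a b x = f x := by
  simp [transferFun, hxa, hxb]

theorem transferFun_transferFun_of_ne (hac : a ≠ c) (hcb : c ≠ b) (hab : a ≠ b) :
    transferFun (transferFun f a c) c b = transferFun f a b := by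
  funext x
  by_cases hxa : x = a <;> by_cases hxb : x = b <;> by_cases hxc : x = c <;> subst_vars <;>
    simp_all [transferFun]

theorem transferFun_transferFun_of_pos (hc : 0 < f c) (hac : a ≠ c) (hcb : c ≠ b) (hab : a ≠ b) :
    transferFun (transferFun f c b) a c = transferFun f a b := by
  funext x
  by_cases hxa : x = a <;> by_cases hxb : x = b <;> by_cases hxc : x = c <;> subst_vars <;>
    simp_all [transferFun]
  omega

theorem sum_tsub_transferFun_lt {s : Finset β} (hb : b ∈ s) (hxb : x ≠ b) (hx : g x < f x)
    (hfb : f b < g b) : ∑ e ∈ s, (g e - transferFun f x b e) < ∑ e ∈ s, (g e - f e) := by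
  refine Finset.sum_lt_sum (fun e _ => ?_) ⟨b, hb, ?_⟩
  · by_cases hex : e = x <;> by_cases heb : e = b <;> subst_vars <;> simp_all [transferFun] <;>
      omega
  · rw [transferFun_apply_right hxb]
    omega

end transferFun

theorem degr_eq_degree_s3 {W : Type} [Fintype W] (T : SimpleGraph W) (x : W) :
    degr T x = T.degree x := by
  rw [degr, ← card_neighborFinset_eq_degree, neighborFinset_def]
  exact Set.ncard_eq_toFinset_card' _

namespace Hypergraph'

open Sum

variable {α β : Type} {H : Hypergraph' α β} {T T₁ T₂ : SimpleGraph (H.V ⊕ H.E)}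
  {f f₁ f₂ : β → ℕ}

theorem exists_eq_inl_of_bip_adj_inr {e : H.E} {y : H.V ⊕ H.E} (h : H.Bip.Adj (inr e) y) :
    ∃ v, y = inl v := by
  obtain ⟨-, ⟨_, _, h', -⟩ | ⟨v, _, rfl, -⟩⟩ := h
  · cases h'
  · exact ⟨v, rfl⟩

theorem exists_eq_inl_inr_of_mem_edgeSet (hT : T ≤ H.Bip) {ε : Sym2 (H.V ⊕ H.E)}
    (hε : ε ∈ T.edgeSet) : ∃ v e, ε = s(inl v, inr e) := by
  induction ε using Sym2.ind with | _ x y =>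
  obtain ⟨-, ⟨v, e, rfl, rfl, -⟩ | ⟨v, e, rfl, rfl, -⟩⟩ := hT hε
  exacts [⟨v, e, rfl⟩, ⟨v, e, Sym2.eq_swap⟩]

theorem Realizes.degree_inr (hT : H.Realizes T f) (e : H.E) : T.degree (inr e) = f e + 1 := by
  rw [← degr_eq_degree_s3, hT.2.2]

def edgesAt (T : SimpleGraph (H.V ⊕ H.E)) (C : Finset H.E) : SimpleGraph (H.V ⊕ H.E) :=
  T.between ↑(Finset.univ.map Function.Embedding.inl : Finset (H.V ⊕ H.E))
    ↑(C.map Function.Embedding.inr : Finset (H.V ⊕ H.E))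

theorem edgesAt_adj_inl_inr {C : Finset H.E} {v : H.V} {c : H.E} :
    (edgesAt T C).Adj (inl v) (inr c) ↔ T.Adj (inl v) (inr c) ∧ c ∈ C := by
  simp [edgesAt, between_adj]

theorem exists_eq_inl_inr_of_edgesAt_adj {C : Finset H.E} {x y : H.V ⊕ H.E}
    (h : (edgesAt T C).Adj x y) : ∃ v, ∃ c ∈ C, x = inl v ∧ y = inr c ∨ x = inr c ∧ y = inl v := by
  simp only [edgesAt, between_adj, Finset.coe_map, Finset.coe_univ, Set.image_univ,
    Set.mem_range, Set.mem_image, Finset.mem_coe] at h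
  obtain ⟨-, ⟨⟨v, rfl⟩, ⟨c, hc, rfl⟩⟩ | ⟨⟨c, hc, rfl⟩, ⟨v, rfl⟩⟩⟩ := h
  exacts [⟨v, c, hc, .inl ⟨rfl, rfl⟩⟩, ⟨v, c, hc, .inr ⟨rfl, rfl⟩⟩]

theorem edgesAt_univ (hT : T ≤ H.Bip) : edgesAt T Finset.univ = T := by
  ext x y
  simp only [edgesAt, between_adj, and_iff_left_iff_imp]
  intro h
  obtain ⟨-, ⟨v, e, rfl, rfl, -⟩ | ⟨v, e, rfl, rfl, -⟩⟩ := hT h <;> simp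

theorem degree_edgesAt_inr (hT : T ≤ H.Bip) {C : Finset H.E} {c : H.E} (hc : c ∈ C) :
    (edgesAt T C).degree (inr c) = T.degree (inr c) := by
  have : (edgesAt T C).neighborFinset (inr c) = T.neighborFinset (inr c) := by
    ext y
    simp only [mem_neighborFinset]
    refine ⟨fun h => between_le h, fun h => ?_⟩
    obtain ⟨v, rfl⟩ := exists_eq_inl_of_bip_adj_inr (hT h)
    simp [edgesAt, between_adj, h, hc]
  rw [← card_neighborFinset_eq_degree, this, card_neighborFinset_eq_degree]

theorem Realizes.card_edgeSet_edgesAt (hT : H.Realizes T f) (C : Finset H.E) :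
    Nat.card (edgesAt T C).edgeSet = ∑ c ∈ C, f c + #C := by
  have hbip : (edgesAt T C).IsBipartiteWith
      ↑(Finset.univ.map Function.Embedding.inl : Finset (H.V ⊕ H.E))
      ↑(C.map Function.Embedding.inr : Finset (H.V ⊕ H.E)) :=
    between_isBipartiteWith (Finset.disjoint_coe.mpr (by simp [Finset.disjoint_left]))
  rw [Nat.card_eq_fintype_card, ← edgeFinset_card,
    ← isBipartiteWith_sum_degrees_eq_card_edges' hbip, Finset.sum_map]
  calc ∑ c ∈ C, (edgesAt T C).degree (inr c)
      = ∑ c ∈ C, (f c + 1) :=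
        Finset.sum_congr rfl fun c hc => (degree_edgesAt_inr hT.1.1 hc).trans (hT.degree_inr c)
    _ = ∑ c ∈ C, f c + #C := by rw [Finset.sum_add_distrib, Finset.card_eq_sum_ones]

theorem Realizes.sum_add_one (hT : H.Realizes T f) : ∑ e ∈ H.E, f e + 1 = #H.V := by
  have hedges := hT.card_edgeSet_edgesAt Finset.univ
  rw [edgesAt_univ hT.1.1, Finset.sum_coe_sort H.E f, Finset.card_univ, Fintype.card_coe] at hedges
  have htree := (isTree_iff_connected_and_card.mp hT.1.2).2
  simp only [Nat.card_sum, Nat.card_eq_finsetCard] at htree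
  omega

theorem Realizes.eq_of_le {g : β → ℕ} (hT : H.Realizes T f) (hg0 : ∀ e, e ∉ H.E → g e = 0)
    (hgsum : ∑ e ∈ H.E, g e + 1 = #H.V) (hgf : ∀ e ∈ H.E, g e ≤ f e) : f = g := by
  have hsum : ∑ e ∈ H.E, g e = ∑ e ∈ H.E, f e := by
    have := hT.sum_add_one
    omega
  funext e
  by_cases he : e ∈ H.E
  · exact ((Finset.sum_eq_sum_iff_of_le hgf).mp hsum e he).symm
  · rw [hT.2.1 e he, hg0 e he]

theorem exists_isHypertree (hconn : H.Bip.Connected) : ∃ f, H.IsHypertree f := by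
  obtain ⟨T, hle, hT⟩ := hconn.exists_isTree_le
  refine ⟨fun e => if he : e ∈ H.E then T.degree (inr ⟨e, he⟩) - 1 else 0, T, ⟨hle, hT⟩,
    fun e he => dif_neg he, fun ⟨e, he⟩ => ?_⟩
  obtain ⟨v, hv⟩ := H.incid_nonempty e he
  have hpos : 0 < T.degree (inr ⟨e, he⟩) :=
    Reachable.degree_pos_left (v := inl ⟨v, H.incid_sub e he hv⟩) (by simp)
      (hT.connected.preconnected _ _)
  simp only [degr_eq_degree_s3, dif_pos he]
  omega

theorem Realizes.degree_replaceEdge (hT : H.Realizes T f) {w v : H.V} {a b : H.E}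
    (hwb : H.Bip.Adj (inl w) (inr b)) (hnadj : ¬ T.Adj (inl w) (inr b))
    {p : T.Walk (inl w) (inr b)} (hp : p.IsPath) (hva : s(inl v, inr a) ∈ p.edges) :
    H.IsSpanningTree (T.replaceEdge (inl v) (inr a) (inl w) (inr b)) ∧
      ∀ e : H.E, (T.replaceEdge (inl v) (inr a) (inl w) (inr b)).degree (inr e) +
        (if e = a then 1 else 0) = f e + 1 + (if e = b then 1 else 0) := by
  have hva' := p.adj_of_mem_edges hva
  refine ⟨⟨sup_le ((deleteEdges_le _).trans hT.1.1) ((edge_le_iff _).mpr (.inr hwb)),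
    hT.1.2.replaceEdge hva' (hT.1.2.isAcyclic.not_reachable_deleteEdges_of_mem_edges hp hva)⟩,
    fun e => ?_⟩
  have := degree_replaceEdge_add hva' hnadj (by simp) (inr e)
  simpa [hT.degree_inr] using this

theorem Realizes.replaceEdge_self (hT : H.Realizes T f) {w v : H.V} {b : H.E}
    (hwb : H.Bip.Adj (inl w) (inr b)) (hnadj : ¬ T.Adj (inl w) (inr b))
    {p : T.Walk (inl w) (inr b)} (hp : p.IsPath) (hvb : s(inl v, inr b) ∈ p.edges) :
    H.Realizes (T.replaceEdge (inl v) (inr b) (inl w) (inr b)) f := by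
  obtain ⟨hsp, hdeg⟩ := hT.degree_replaceEdge hwb hnadj hp hvb
  exact ⟨hsp, hT.2.1, fun e => by rw [degr_eq_degree_s3]; have := hdeg e; omega⟩

section transfer

variable [DecidableEq β]

theorem Realizes.replaceEdge_transferFun (hT : H.Realizes T f) {w v : H.V} {a b : H.E}
    (hwb : H.Bip.Adj (inl w) (inr b)) (hnadj : ¬ T.Adj (inl w) (inr b))
    {p : T.Walk (inl w) (inr b)} (hp : p.IsPath) (hva : s(inl v, inr a) ∈ p.edges)
    (hab : a ≠ b) :
    H.Realizes (T.replaceEdge (inl v) (inr a) (inl w) (inr b)) (transferFun f a b) ∧ 0 < f a := by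
  obtain ⟨hsp, hdeg⟩ := hT.degree_replaceEdge hwb hnadj hp hva
  have hpos : 0 < (T.replaceEdge (inl v) (inr a) (inl w) (inr b)).degree (inr a) :=
    Reachable.degree_pos_left (v := inl w) (by simp) (hsp.2.connected.preconnected _ _)
  have ha := hdeg a
  rw [if_pos rfl, if_neg hab] at ha
  have hab' : (a : β) ≠ b := Subtype.coe_injective.ne hab
  refine ⟨⟨hsp, fun e he => ?_, fun e => ?_⟩, by omega⟩
  · rw [transferFun_apply_of_ne (fun h : e = a => he (h ▸ a.2)) (fun h : e = b => he (h ▸ b.2)),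
      hT.2.1 e he]
  · rw [degr_eq_degree_s3]
    have := hdeg e
    by_cases hea : e = a
    · subst hea
      rw [transferFun_apply_left]
      omega
    by_cases heb : e = b
    · subst heb
      rw [transferFun_apply_right hab']
      simp only [hea, if_false, if_true] at this
      omega
    rw [transferFun_apply_of_ne (Subtype.coe_injective.ne hea) (Subtype.coe_injective.ne heb)]
    simp only [hea, heb, if_false] at this
    omega

theorem Realizes.exists_transfer_of_lt (h₁ : H.Realizes T₁ f₁) (h₂ : H.Realizes T₂ f₂) {b : H.E}
    (hb : f₁ b < f₂ b) : ∃ x : H.E, f₂ x < f₁ x ∧ H.IsHypertree (transferFun f₁ x b) := by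
  induction hn : #(T₂.edgeFinset \ T₁.edgeFinset) using Nat.strong_induction_on
    generalizing T₁ f₁ b with | _ n ih =>
  obtain ⟨y, hy₂, hy₁⟩ := exists_adj_not_adj_of_degree_lt
    (show T₁.degree (inr b) < T₂.degree (inr b) by rw [h₁.degree_inr, h₂.degree_inr]; omega)
  obtain ⟨w, rfl⟩ := exists_eq_inl_of_bip_adj_inr (h₂.1.1 hy₂)
  have hwb := h₂.1.1 hy₂.symm
  have hnadj : ¬ T₁.Adj (inl w) (inr b) := fun h => hy₁ h.symm
  obtain ⟨p, hp⟩ := h₁.1.2.connected.preconnected.exists_isPath (inl w) (inr b)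
  obtain ⟨ε, hεp, hεT₂⟩ := h₂.1.2.isAcyclic.exists_mem_edges_notMem_edgeSet hy₂.symm hp
    fun h => hnadj (p.adj_of_mem_edges h)
  obtain ⟨v, a, rfl⟩ := exists_eq_inl_inr_of_mem_edgeSet h₁.1.1 (p.edges_subset_edgeSet hεp)
  have hlt := (card_edgeFinset_sdiff_replaceEdge_lt (u := inl v) (v := inr a) hy₂.symm hnadj
    hεT₂).trans_eq hn
  rcases eq_or_ne a b with rfl | hab
  · exact ih _ hlt (h₁.replaceEdge_self hwb hnadj hp hεp) hb rfl
  obtain ⟨h₁', hpos⟩ := h₁.replaceEdge_transferFun hwb hnadj hp hεp hab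
  by_cases ha : f₂ a < f₁ a
  · exact ⟨a, ha, _, h₁'⟩
  have hab' : (a : β) ≠ b := Subtype.coe_injective.ne hab
  -- now `a` is short in the new hypertree: recurse with receiver `a` and compose the transfers
  obtain ⟨y, hy, hy'⟩ := ih _ hlt h₁' (b := a) (by rw [transferFun_apply_left]; omega) rfl
  have hya : (y : β) ≠ a := by
    intro h
    rw [h, transferFun_apply_left] at hy
    omega
  have hyb : (y : β) ≠ b := by
    intro h
    rw [h, transferFun_apply_right hab'] at hy
    omega
  rw [transferFun_apply_of_ne hya hyb] at hy
  rw [transferFun_transferFun_of_pos hpos hya hab' hyb] at hy'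
  exact ⟨y, hy, hy'⟩

def IsTransferClosed (H : Hypergraph' α β) (f : β → ℕ) (C : Finset H.E) : Prop :=
  ∀ c ∈ C, ∀ a : H.E, H.IsHypertree (transferFun f a c) → a ∈ C

def transferSources (H : Hypergraph' α β) (f : β → ℕ) (b : H.E) : Finset H.E :=
  Finset.univ.filter fun x => x = b ∨ H.IsHypertree (transferFun f x b)

theorem isTransferClosed_transferSources (b : H.E) :
    H.IsTransferClosed f (H.transferSources f b) := by
  intro c hc a ha
  simp only [transferSources, Finset.mem_filter, Finset.mem_univ, true_and] at hc ⊢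
  rcases eq_or_ne a c with rfl | hac
  · exact hc
  rcases eq_or_ne a b with rfl | hab
  · exact .inl rfl
  rcases eq_or_ne c b with rfl | hcb
  · exact .inr ha
  replace hc := hc.resolve_left hcb
  rw [← Subtype.coe_ne_coe] at hac hab hcb
  -- exchange between `f - a + c` and `f - c + b` can only move the unit back from `c` to `b`
  obtain ⟨T₁, h₁⟩ := ha
  obtain ⟨T₂, h₂⟩ := hc
  obtain ⟨x, hx, hx'⟩ := h₁.exists_transfer_of_lt h₂ (b := b) (by
    rw [transferFun_apply_of_ne hab.symm hcb.symm, transferFun_apply_right hcb]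
    omega)
  have hxc : (x : β) = c := by
    by_contra hxc
    by_cases hxa : (x : β) = a
    · rw [hxa, transferFun_apply_left, transferFun_apply_of_ne hac hab] at hx
      omega
    by_cases hxb : (x : β) = b
    · rw [hxb, transferFun_apply_right hcb, transferFun_apply_of_ne hab.symm hcb.symm] at hx
      omega
    rw [transferFun_apply_of_ne hxa hxc, transferFun_apply_of_ne hxc hxb] at hx
    omega
  rw [hxc, transferFun_transferFun_of_ne hac hcb hab] at hx'
  exact .inr hx'

theorem Realizes.sum_le_sum_of_isTransferClosed (hT : H.Realizes T f)
    {C : Finset H.E} (hC : H.IsTransferClosed f C) {h : β → ℕ} (hh : H.IsHypertree h) :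
    ∑ c ∈ C, h c ≤ ∑ c ∈ C, f c := by
  obtain ⟨S, hS⟩ := hh
  by_contra! hlt
  -- counting edges, some edge of `S` at `C` joins two components of the edges of `T` at `C`
  obtain ⟨x, y, hxy, hnr⟩ : ∃ x y, (edgesAt S C).Adj x y ∧ ¬ (edgesAt T C).Reachable x y := by
    by_contra! hall
    have hacyc : (edgesAt S C).IsAcyclic := hS.1.2.isAcyclic.anti between_le
    have := hacyc.card_edgeSet_le_of_forall_adj_reachable hall
    rw [hT.card_edgeSet_edgesAt, hS.card_edgeSet_edgesAt] at this
    omega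
  obtain ⟨v, c, hc, hvc, hnr⟩ : ∃ v, ∃ c ∈ C, S.Adj (inl v) (inr c) ∧
      ¬ (edgesAt T C).Reachable (inl v) (inr c) := by
    obtain ⟨v, c, hc, ⟨rfl, rfl⟩ | ⟨rfl, rfl⟩⟩ := exists_eq_inl_inr_of_edgesAt_adj hxy
    exacts [⟨v, c, hc, between_le hxy, hnr⟩, ⟨v, c, hc, (between_le hxy).symm, mt .symm hnr⟩]
  have hnadj : ¬ T.Adj (inl v) (inr c) := fun h =>
    hnr (edgesAt_adj_inl_inr.mpr ⟨h, hc⟩).reachable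
  obtain ⟨p, hp⟩ := hT.1.2.connected.preconnected.exists_isPath (inl v) (inr c)
  obtain ⟨ε, hεp, hεC⟩ : ∃ ε ∈ p.edges, ε ∉ (edgesAt T C).edgeSet := by
    by_contra! h
    exact hnr ⟨p.transfer _ h⟩
  obtain ⟨v', a, rfl⟩ := exists_eq_inl_inr_of_mem_edgeSet hT.1.1 (p.edges_subset_edgeSet hεp)
  have haC : a ∉ C := fun ha => hεC (edgesAt_adj_inl_inr.mpr ⟨p.adj_of_mem_edges hεp, ha⟩)
  have hac : a ≠ c := by
    rintro rfl
    exact haC hc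
  exact haC (hC c hc a ⟨_, (hT.replaceEdge_transferFun (hS.1.1 hvc) hnadj hp hεp hac).1⟩)

theorem IsHypertree.exists_transfer_of_lt_of_dominated (hf : H.IsHypertree f) {g : β → ℕ}
    (hdom : ∀ C : Finset H.E, C.Nonempty → ∃ h, H.IsHypertree h ∧ ∑ c ∈ C, g c ≤ ∑ c ∈ C, h c)
    {b : H.E} (hb : f b < g b) : ∃ x : H.E, g x < f x ∧ H.IsHypertree (transferFun f x b) := by
  obtain ⟨T, hT⟩ := hf
  by_contra! hall
  have hbC : b ∈ H.transferSources f b := by simp [transferSources]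
  have hfg : ∀ x ∈ H.transferSources f b, f x ≤ g x := by
    intro x hx
    simp only [transferSources, Finset.mem_filter, Finset.mem_univ, true_and] at hx
    rcases hx with rfl | hx
    · exact hb.le
    · exact not_lt.mp fun h => hall x h hx
  obtain ⟨h, hh, hgh⟩ := hdom _ ⟨b, hbC⟩
  have := hT.sum_le_sum_of_isTransferClosed (isTransferClosed_transferSources b) hh
  have := Finset.sum_lt_sum hfg ⟨b, hbC, hb⟩
  omega

end transfer

end Hypergraph'

theorem hypertree_discrete_convexity_general (H : Hypergraph' α β) (hconn : H.Bip.Connected)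
    {ι : Type} (F : ι → β → ℕ) (hF : ∀ i, H.IsHypertree (F i))
    (g : β → ℕ) (hg0 : ∀ e, e ∉ H.E → g e = 0)
    (hgsum : (∑ e ∈ H.E, (g e : ℤ)) = (H.V.card : ℤ) - 1)
    (hdom : ∀ E' : Finset β, E' ⊆ H.E → E'.Nonempty →
      ∃ i, (∑ e ∈ E', g e) ≤ ∑ e ∈ E', F i e) :
    H.IsHypertree g := by
  have hdom' : ∀ C : Finset H.E, C.Nonempty →
      ∃ h, H.IsHypertree h ∧ ∑ c ∈ C, g c ≤ ∑ c ∈ C, h c := fun C hC => by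
    obtain ⟨i, hi⟩ := hdom (C.map (Function.Embedding.subtype _))
      (fun _ => C.property_of_mem_map_subtype) hC.map
    exact ⟨F i, hF i, by simpa using hi⟩
  obtain ⟨f, hf, hmin⟩ := (measure fun f : β → ℕ => ∑ e ∈ H.E, (g e - f e)).wf.has_min
    {f | H.IsHypertree f} (Hypergraph'.exists_isHypertree hconn)
  have hgf : ∀ e ∈ H.E, g e ≤ f e := fun e he => by
    by_contra! hlt
    obtain ⟨x, hx, hx'⟩ := hf.exists_transfer_of_lt_of_dominated hdom' (b := ⟨e, he⟩) hlt
    have hxe : (x : β) ≠ e := fun h => lt_asymm (h ▸ hx) hlt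
    exact hmin _ hx' (sum_tsub_transferFun_lt he hxe hx hlt)
  have hgsum' : ∑ e ∈ H.E, g e + 1 = #H.V := by
    zify
    omega
  obtain ⟨T, hT⟩ := hf
  exact hT.eq_of_le hg0 hgsum' hgf ▸ ⟨T, hT⟩

/-- discrete convexity of the set of hypertrees. -/
theorem hypertree_discrete_convexity (H : Hypergraph' α β) (hconn : H.Bip.Connected)
    {ι : Type} (F : ι → β → ℕ) (hF : ∀ i, H.IsHypertree (F i))
    (g : β → ℕ) (hg0 : ∀ e, e ∉ H.E → g e = 0)
    (hgnn : ∀ e ∈ H.E, 0 ≤ g e)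
    (hgsum : (∑ e ∈ H.E, (g e : ℤ)) = (H.V.card : ℤ) - 1)
    (hdom : ∀ E' : Finset β, E' ⊆ H.E → E'.Nonempty →
      ∃ i, (∑ e ∈ E', g e) ≤ ∑ e ∈ E', F i e) :
    H.IsHypertree g :=
  hypertree_discrete_convexity_general H hconn F hF g hg0 hgsum hdom
end
end

section
/- Let a, b, and c be hyperedges in the hypergraph H = (V, E) (with Bip H connected) and let f be a hypertree such that a transfer of valence is possible from a to b and a transfer of valence is possible from b to c. Then f is also such that a transfer of valence is possible from a to c. -/
open SimpleGraph Finset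
open scoped Classical

noncomputable section

variable {α β : Type} [DecidableEq α] [DecidableEq β]

/-!
Realise `f - e_a + e_b` by a spanning tree `T_ab` of `Bip H` and `f - e_b + e_c` by `T_bc`. At `a`
the tree `T_bc` has larger degree than `T_ab`, so the exchange property of spanning trees of a
bipartite graph yields a hyperedge `y` at which `T_bc` has smaller degree than `T_ab`, necessarily
`y = b`, together with a spanning tree whose hyperedge degrees are those of `T_bc` with one unit
moved from `a` to `b`. That tree realises `f - e_a + e_c`.

The exchange property comes from repeated edge swaps: delete an edge of `T₁ \ T₂` at the pivot,
reconnect the two components of the rest by an edge of `T₂`, and if the hyperedge end of the new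
edge has no deficit against `T₂` yet, make it the new pivot. Every swap decreases `|T₁ \ T₂|`.
-/

namespace SimpleGraph

section

variable {W : Type} {G T : SimpleGraph W} {p q x y : W}

lemma degr_sup_edge [Finite W] (hxy : x ≠ y) (hn : ¬ G.Adj x y) (z : W) :
    degr (G ⊔ edge x y) z = degr G z + if z = x ∨ z = y then 1 else 0 := by
  rcases eq_or_ne z x with rfl | hzx
  · have hN : (G ⊔ edge z y).neighborSet z = insert y (G.neighborSet z) := by
      ext w; simp only [mem_neighborSet, sup_adj, edge_adj, Set.mem_insert_iff]; grind
    simp [degr, hN, Set.ncard_insert_of_notMem (show y ∉ G.neighborSet z from hn)]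
  rcases eq_or_ne z y with rfl | hzy
  · have hN : (G ⊔ edge x z).neighborSet z = insert x (G.neighborSet z) := by
      ext w; simp only [mem_neighborSet, sup_adj, edge_adj, Set.mem_insert_iff]; grind
    simp [degr, hN, Set.ncard_insert_of_notMem (show x ∉ G.neighborSet z from fun h => hn h.symm)]
  · have hN : (G ⊔ edge x y).neighborSet z = G.neighborSet z := by
      ext w; simp [edge_adj, hzx, hzy]
    simp [degr, hN, hzx, hzy]

lemma degr_sdiff_edge [Finite W] (hpq : G.Adj p q) (z : W) :
    degr (G \ edge p q) z + (if z = p ∨ z = q then 1 else 0) = degr G z := by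
  have hn : ¬ (G \ edge p q).Adj p q := by simp [edge_adj, hpq.ne]
  rw [← degr_sup_edge hpq.ne hn, sdiff_sup_cancel ((edge_le_iff G).mpr (.inr hpq))]

lemma degr_sdiff_edge_sup_edge [Finite W] (hpq : T.Adj p q) (hxy : x ≠ y)
    (hn : ¬ (T \ edge p q).Adj x y) (z : W) :
    degr (T \ edge p q ⊔ edge x y) z + (if z = p ∨ z = q then 1 else 0) =
      degr T z + if z = x ∨ z = y then 1 else 0 := by
  rw [degr_sup_edge hxy hn, ← degr_sdiff_edge hpq z]
  ring

lemma Preconnected.reachable_sdiff_edge_or (hG : G.Preconnected) (p q w : W) :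
    (G \ edge p q).Reachable w p ∨ (G \ edge p q).Reachable w q := by
  by_contra! hw
  obtain ⟨d, -, hd, hd'⟩ := (hG p w).some.exists_boundary_dart
    {v | (G \ edge p q).Reachable v p ∨ (G \ edge p q).Reachable v q} (.inl .rfl)
    (by simpa using hw)
  have hadj : (G \ edge p q).Adj d.fst d.snd := by
    refine ⟨d.adj, fun he => hd' ?_⟩
    rcases (edge_adj _ _ _ _).mp he with ⟨⟨-, rfl⟩ | ⟨-, rfl⟩, -⟩
    exacts [.inr .rfl, .inl .rfl]
  rcases hd with h | h
  exacts [hd' (.inl (hadj.symm.reachable.trans h)), hd' (.inr (hadj.symm.reachable.trans h))]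

lemma IsTree.sdiff_edge_sup_edge (hT : T.IsTree) (hxy : ¬ (T \ edge p q).Reachable x y) :
    (T \ edge p q ⊔ edge x y).IsTree := by
  have hle : T \ edge p q ≤ T \ edge p q ⊔ edge x y := le_sup_left
  have hside := hT.connected.preconnected.reachable_sdiff_edge_or p q
  have hadj : (T \ edge p q ⊔ edge x y).Adj x y :=
    .inr ((edge_adj _ _ _ _).mpr ⟨.inl ⟨rfl, rfl⟩, fun h => hxy (h ▸ .rfl)⟩)
  have hqp : (T \ edge p q ⊔ edge x y).Reachable q p := by
    rcases hside x with hx | hx <;> rcases hside y with hy | hy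
    · exact absurd (hx.trans hy.symm) hxy
    · exact (hy.symm.mono hle).trans (hadj.symm.reachable.trans (hx.mono hle))
    · exact (hx.symm.mono hle).trans (hadj.reachable.trans (hy.mono hle))
    · exact absurd (hx.trans hy.symm) hxy
  refine ⟨(connected_iff_exists_forall_reachable _).mpr ⟨p, fun w => ?_⟩,
    (hT.isAcyclic.anti sdiff_le).sup_edge_of_not_reachable hxy⟩
  rcases hside w with hw | hw
  exacts [(hw.mono hle).symm, hqp.symm.trans (hw.mono hle).symm]

lemma IsAcyclic.exists_adj_not_reachable_sdiff_edge (hT : T.IsAcyclic) (hpq : T.Adj p q)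
    (hG : G.Reachable p q) : ∃ x y, G.Adj x y ∧ ¬ (T \ edge p q).Reachable x y := by
  obtain ⟨d, -, hd, hd'⟩ := hG.some.exists_boundary_dart {v | (T \ edge p q).Reachable p v}
    .rfl (isAcyclic_iff_forall_isBridge.mp hT (e := s(p, q)) hpq)
  exact ⟨d.fst, d.snd, d.adj, fun h => hd' (hd.trans h)⟩

lemma ncard_edgeSet_sdiff_edge_sup_edge_lt [Finite W] (hpq : T.Adj p q) (hpq' : ¬ G.Adj p q)
    (hxy : G.Adj x y) :
    ((T \ edge p q ⊔ edge x y).edgeSet \ G.edgeSet).ncard < (T.edgeSet \ G.edgeSet).ncard := by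
  refine Set.ncard_lt_ncard ((Set.ssubset_iff_of_subset ?_).mpr ⟨s(p, q), ⟨hpq, hpq'⟩, ?_⟩)
  · rintro e ⟨he, heG⟩
    simp only [edgeSet_sup, edgeSet_sdiff, Set.mem_union, Set.mem_sdiff] at he
    rcases he with he | he
    · exact ⟨he.1, heG⟩
    · exact absurd (edgeSet_edge_subset he ▸ hxy) heG
  · rintro ⟨he, -⟩
    simp only [edgeSet_sup, edgeSet_sdiff, Set.mem_union, Set.mem_sdiff] at he
    rcases he with he | he
    · exact he.2 (by simp [hpq.ne])
    · refine hpq' ?_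
      rwa [← mem_edgeSet, Set.mem_singleton_iff.mp (edgeSet_edge_subset he)]

end

section

variable {X Y : Type}

def rightDegrees (T : SimpleGraph (X ⊕ Y)) (y : Y) : ℕ := degr T (.inr y)

variable [DecidableEq Y] [Finite X] [Finite Y] {T₁ T₂ : SimpleGraph (X ⊕ Y)}

lemma rightDegrees_sdiff_edge_sup_edge {T : SimpleGraph (X ⊕ Y)} {b : Y}
    {v : X} {x y : X ⊕ Y} (hbv : T.Adj (.inr b) (.inl v))
    (hxy : (completeBipartiteGraph X Y).Adj x y) (hn : ¬ (T \ edge (.inr b) (.inl v)).Adj x y) :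
    ∃ c, rightDegrees (T \ edge (.inr b) (.inl v) ⊔ edge x y) + Pi.single b 1 =
      rightDegrees T + Pi.single c 1 := by
  have hdeg := degr_sdiff_edge_sup_edge hbv hxy.ne hn
  rcases x with x | c <;> rcases y with y | c <;>
    simp only [completeBipartiteGraph_adj, Sum.isLeft_inl, Sum.isLeft_inr, Sum.isRight_inl,
      Sum.isRight_inr, Bool.false_eq_true, and_false, false_and, or_self] at hxy
  all_goals
    refine ⟨c, funext fun z => ?_⟩
    have := hdeg (.inr z)
    simp only [rightDegrees, Pi.add_apply, Pi.single_apply]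
    simp only [Sum.inr.injEq, reduceCtorEq, or_false, false_or] at this
    split_ifs at this ⊢ <;> omega

lemma IsTree.exists_exchange_rightDegrees (h₁ : T₁.IsTree)
    (h₂ : T₂.Preconnected) (hB₁ : T₁ ≤ completeBipartiteGraph X Y)
    (hB₂ : T₂ ≤ completeBipartiteGraph X Y) {b : Y}
    (hb : rightDegrees T₂ b < rightDegrees T₁ b) :
    ∃ c T, T ≤ T₁ ⊔ T₂ ∧ T.IsTree ∧
      (T.edgeSet \ T₂.edgeSet).ncard < (T₁.edgeSet \ T₂.edgeSet).ncard ∧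
      rightDegrees T + Pi.single b 1 = rightDegrees T₁ + Pi.single c 1 := by
  obtain ⟨u, hu₁, hu₂⟩ : ∃ u, T₁.Adj (.inr b) u ∧ ¬ T₂.Adj (.inr b) u := by
    by_contra! h
    exact hb.not_ge (Set.ncard_le_ncard h)
  obtain ⟨v, rfl⟩ : ∃ v, u = .inl v := by
    have := hB₁ hu₁
    rcases u with v | _
    · exact ⟨v, rfl⟩
    · simp at this
  obtain ⟨x, y, hxy, hnr⟩ :=
    h₁.isAcyclic.exists_adj_not_reachable_sdiff_edge hu₁ (h₂ _ _)
  obtain ⟨c, hc⟩ := rightDegrees_sdiff_edge_sup_edge hu₁ (hB₂ hxy) fun h => hnr h.reachable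
  refine ⟨c, _, sup_le (sdiff_le.trans le_sup_left) ((edge_le_iff _).mpr (.inr (.inr hxy))),
    h₁.sdiff_edge_sup_edge hnr, ncard_edgeSet_sdiff_edge_sup_edge_lt hu₁ hu₂ hxy, hc⟩

theorem IsTree.exists_rightDegrees_transfer (h₁ : T₁.IsTree)
    (h₂ : T₂.Preconnected) (hB₁ : T₁ ≤ completeBipartiteGraph X Y)
    (hB₂ : T₂ ≤ completeBipartiteGraph X Y) {b : Y}
    (hb : rightDegrees T₂ b < rightDegrees T₁ b) :
    ∃ c T, rightDegrees T₁ c < rightDegrees T₂ c ∧ T ≤ T₁ ⊔ T₂ ∧ T.IsTree ∧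
      rightDegrees T + Pi.single b 1 = rightDegrees T₁ + Pi.single c 1 := by
  induction hn : (T₁.edgeSet \ T₂.edgeSet).ncard using Nat.strong_induction_on
    generalizing T₁ b with
  | _ n ih =>
  obtain ⟨c, T, hle, hT, hlt, hdeg⟩ := h₁.exists_exchange_rightDegrees h₂ hB₁ hB₂ hb
  by_cases hc : rightDegrees T₁ c < rightDegrees T₂ c
  · exact ⟨c, T, hc, hle, hT, hdeg⟩
  -- otherwise `c` has an excess over `T₂` in `T` and becomes the next pivot
  have hdeg_at := fun z => congrFun hdeg z
  simp only [Pi.add_apply, Pi.single_apply] at hdeg_at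
  have hc' : rightDegrees T₂ c < rightDegrees T c := by
    have := hdeg_at c
    rw [if_pos rfl] at this
    split_ifs at this with hcb
    · subst hcb; omega
    · omega
  obtain ⟨y, T', hy, hle', hT', hdeg'⟩ :=
    ih _ (hn ▸ hlt) hT (hle.trans (sup_le hB₁ hB₂)) hc' rfl
  have hdeg'_at := fun z => congrFun hdeg' z
  simp only [Pi.add_apply, Pi.single_apply] at hdeg'_at
  refine ⟨y, T', ?_, hle'.trans (sup_le hle le_sup_right), hT', funext fun z => ?_⟩
  · have h1 := hdeg_at y
    have h2 := hdeg'_at y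
    split_ifs at h1 h2 <;> subst_vars <;> omega
  · have h1 := hdeg_at z
    have h2 := hdeg'_at z
    simp only [Pi.add_apply, Pi.single_apply]
    split_ifs at h1 h2 ⊢ <;> omega

end

end SimpleGraph

section Transfer

variable {f : β → ℕ} {a b c : β}

lemma eq_of_transferFun_lt_transferFun (hab : a ≠ b) (hac : a ≠ c) (hbc : b ≠ c) {x : β}
    (h : transferFun f b c x < transferFun f a b x) : x = b := by
  unfold transferFun at h
  split_ifs at h <;> subst_vars <;> first | rfl | omega

lemma transferFun_add_ite_eq (hab : a ≠ b) (hac : a ≠ c) (hbc : b ≠ c) (hfa : 0 < f a)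
    (hfb : 0 < f b) (x : β) : transferFun f a c x + (if x = a then 1 else 0) =
      transferFun f b c x + if x = b then 1 else 0 := by
  unfold transferFun
  split_ifs <;> subst_vars <;> first | omega | simp_all

end Transfer

namespace Hypergraph'

omit [DecidableEq α] [DecidableEq β] in
lemma bip_le_completeBipartiteGraph (H : Hypergraph' α β) :
    H.Bip ≤ completeBipartiteGraph ↥H.V ↥H.E := by
  rintro _ _ ⟨-, ⟨v, e, rfl, rfl, -⟩ | ⟨v, e, rfl, rfl, -⟩⟩ <;> simp

end Hypergraph'

theorem transfer_trans_general (H : Hypergraph' α β)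
    (a b c : β) (ha : a ∈ H.E) (hb : b ∈ H.E) (hc : c ∈ H.E)
    (hab : a ≠ b) (hbc : b ≠ c) (hac : a ≠ c)
    (f : β → ℕ)
    (h₁ : H.TransferPossible f a b) (h₂ : H.TransferPossible f b c) :
    H.TransferPossible f a c := by
  obtain ⟨hfa, Tab, ⟨hab_le, hab_tree⟩, -, hab_deg⟩ := h₁
  obtain ⟨hfb, Tbc, ⟨hbc_le, hbc_tree⟩, hbc_zero, hbc_deg⟩ := h₂
  replace hab_deg : ∀ e, rightDegrees Tab e = transferFun f a b e + 1 := hab_deg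
  replace hbc_deg : ∀ e, rightDegrees Tbc e = transferFun f b c e + 1 := hbc_deg
  have hpivot : rightDegrees Tab ⟨a, ha⟩ < rightDegrees Tbc ⟨a, ha⟩ := by
    simp only [hab_deg, hbc_deg, transferFun, if_pos, hab, hac, if_false]
    omega
  obtain ⟨y, T, hy, hle, hT, hdeg⟩ :=
    hbc_tree.exists_rightDegrees_transfer hab_tree.connected.preconnected
      (hbc_le.trans H.bip_le_completeBipartiteGraph) (hab_le.trans H.bip_le_completeBipartiteGraph)
      hpivot
  have hyb : (y : β) = b := by
    rw [hab_deg, hbc_deg] at hy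
    exact eq_of_transferFun_lt_transferFun (f := f) hab hac hbc (by omega)
  refine ⟨hfa, T, ⟨hle.trans (sup_le hbc_le hab_le), hT⟩, fun e he => ?_, fun e => ?_⟩
  · have hea : e ≠ a := fun h => he (h ▸ ha)
    have heb : e ≠ b := fun h => he (h ▸ hb)
    have hec : e ≠ c := fun h => he (h ▸ hc)
    simpa [transferFun, hea, heb, hec] using hbc_zero e he
  · have h1 := congrFun hdeg e
    have h2 := transferFun_add_ite_eq hab hac hbc hfa hfb e
    simp only [Pi.add_apply, Pi.single_apply, hbc_deg, Subtype.ext_iff, hyb] at h1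
    change rightDegrees T e = _
    omega

/-- rhombus lemma: transfers of valence compose. -/
theorem transfer_trans (H : Hypergraph' α β) (hconn : H.Bip.Connected)
    (a b c : β) (ha : a ∈ H.E) (hb : b ∈ H.E) (hc : c ∈ H.E)
    (hab : a ≠ b) (hbc : b ≠ c) (hac : a ≠ c)
    (f : β → ℕ) (hf : H.IsHypertree f)
    (h₁ : H.TransferPossible f a b) (h₂ : H.TransferPossible f b c) :
    H.TransferPossible f a c :=
  transfer_trans_general H a b c ha hb hc hab hbc hac f h₁ h₂
end
end
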